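/- arXiv:0903.3531 — 2 statements merged into one kernel-verified Lean document; each statement's English description precedes it below -/
import Mathlib

section
/- The function f(k,k',m) = A(k)A(k') + A(k)·(k/(E(k)+m))·(k'/(E(k')+m))·A(k'), where E(k)=√(k²+m²) and A(k)=√((E(k)+m)/(2E(k))), is monotonically increasing in m ≥ 0 whenever kk' < 0. -/
/-!
Write `(m, k) = E (cos θ, sin θ)`. Then `A(k,m) (1, k/(E+m)) = (cos (θ/2), sin (θ/2))`, so `f` is
`cos ((θ - θ')/2)` and `f² = (1 + cos (θ - θ'))/2` with `cos (θ - θ') = (m² + kk')/(E E')`.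
Since `(k² + m²)(k'² + m²) = (m² + kk')² + m²(k - k')²`, for `m > 0` this cosine is
`φ (m + kk'/m)` with `φ t = t / √(t² + (k - k')²)` increasing, and `m ↦ m + kk'/m` increases
when `kk' < 0`. At `m = 0` the cosine is `-1`, its minimum.
-/

open Real Set

noncomputable def Ekin (k m : ℝ) : ℝ := Real.sqrt (k ^ 2 + m ^ 2)
noncomputable def Afac (k m : ℝ) : ℝ := Real.sqrt ((Ekin k m + m) / (2 * Ekin k m))

lemma neg_one_le_div_of_abs_le {x d : ℝ} (h : |x| ≤ d) : -1 ≤ x / d := by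
  have hd : 0 ≤ d := (abs_nonneg x).trans h
  have : |x / d| ≤ 1 := by
    rw [abs_div, abs_of_nonneg hd]
    exact div_le_one_of_le₀ h hd
  linarith [neg_abs_le (x / d)]

lemma monotone_div_sqrt_sq_add {a : ℝ} (ha : 0 < a) :
    Monotone fun t : ℝ => t / √(t ^ 2 + a) := by
  refine monotone_of_odd_of_monotoneOn_nonneg (fun t => by simp [neg_div]) ?_
  intro s (hs : 0 ≤ s) t (ht : 0 ≤ t) hst
  rw [div_le_div_iff₀ (by positivity) (by positivity),
    ← sq_le_sq₀ (by positivity) (by positivity), mul_pow, mul_pow,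
    sq_sqrt (by positivity), sq_sqrt (by positivity)]
  have : s ^ 2 ≤ t ^ 2 := by gcongr
  nlinarith

lemma monotoneOn_add_div {c : ℝ} (hc : c ≤ 0) :
    MonotoneOn (fun m : ℝ => m + c / m) (Ioi 0) := by
  intro s (hs : 0 < s) t (_ : 0 < t) hst
  have : -c / t ≤ -c / s := div_le_div_of_nonneg_left (by linarith) hs hst
  simp only [neg_div] at this
  dsimp only
  linarith

lemma Ekin_sq (k m : ℝ) : Ekin k m ^ 2 = k ^ 2 + m ^ 2 :=
  sq_sqrt (by positivity)

lemma Ekin_pos {k : ℝ} (hk : k ≠ 0) (m : ℝ) : 0 < Ekin k m :=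
  sqrt_pos.2 (by positivity)

lemma abs_le_Ekin (k m : ℝ) : |k| ≤ Ekin k m :=
  abs_le_sqrt (by nlinarith)

lemma Ekin_add_nonneg (k m : ℝ) : 0 ≤ Ekin k m + m := by
  have : |m| ≤ Ekin k m := abs_le_sqrt (by nlinarith)
  linarith [neg_abs_le m]

lemma Ekin_add_pos {k : ℝ} (hk : k ≠ 0) (m : ℝ) : 0 < Ekin k m + m := by
  have : |m| < Ekin k m := by
    rw [Ekin, lt_sqrt (abs_nonneg m), sq_abs]
    linarith [sq_pos_of_ne_zero hk]
  linarith [neg_abs_le m]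

lemma Afac_sq (k m : ℝ) : Afac k m ^ 2 = (Ekin k m + m) / (2 * Ekin k m) :=
  sq_sqrt (div_nonneg (Ekin_add_nonneg k m) (by unfold Ekin; positivity))

lemma Ekin_mul_Ekin (k k' m : ℝ) :
    Ekin k m * Ekin k' m = √((m ^ 2 + k * k') ^ 2 + (m * (k - k')) ^ 2) := by
  rw [Ekin, Ekin, ← sqrt_mul (by positivity)]
  ring_nf

noncomputable def cosAngle (k k' m : ℝ) : ℝ := (m ^ 2 + k * k') / (Ekin k m * Ekin k' m)

lemma neg_one_le_cosAngle (k k' m : ℝ) : -1 ≤ cosAngle k k' m := by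
  rw [cosAngle, Ekin_mul_Ekin]
  exact neg_one_le_div_of_abs_le (abs_le_sqrt (le_add_of_nonneg_right (sq_nonneg _)))

lemma cosAngle_zero {k k' : ℝ} (hkk' : k * k' < 0) : cosAngle k k' 0 = -1 := by
  rw [cosAngle, Ekin_mul_Ekin]
  simp [sqrt_sq_eq_abs, abs_of_neg hkk', hkk'.ne]

lemma cosAngle_eq_of_pos (k k' : ℝ) {m : ℝ} (hm : 0 < m) :
    cosAngle k k' m = (m + k * k' / m) / √((m + k * k' / m) ^ 2 + (k - k') ^ 2) := by
  have hsq : (m ^ 2 + k * k') ^ 2 + (m * (k - k')) ^ 2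
      = m ^ 2 * ((m + k * k' / m) ^ 2 + (k - k') ^ 2) := by
    field_simp
  have hnum : m ^ 2 + k * k' = m * (m + k * k' / m) := by
    field_simp
  rw [cosAngle, Ekin_mul_Ekin, hsq, sqrt_mul (sq_nonneg m), sqrt_sq hm.le, hnum,
    mul_div_mul_left _ _ hm.ne']

lemma cosAngle_monotoneOn {k k' : ℝ} (hkk' : k * k' < 0) :
    MonotoneOn (cosAngle k k') (Ici 0) := by
  intro s (hs : 0 ≤ s) t (_ : 0 ≤ t) hst
  rcases hs.eq_or_lt with rfl | hs
  · rw [cosAngle_zero hkk']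
    exact neg_one_le_cosAngle k k' t
  have hkk : k - k' ≠ 0 := by
    rw [sub_ne_zero]
    rintro rfl
    nlinarith [mul_self_nonneg k]
  rw [cosAngle_eq_of_pos k k' hs, cosAngle_eq_of_pos k k' (hs.trans_le hst)]
  exact monotone_div_sqrt_sq_add (sq_pos_of_ne_zero hkk)
    (monotoneOn_add_div hkk'.le hs (hs.trans_le hst) hst)

noncomputable def overlap (k k' m : ℝ) : ℝ :=
  Afac k m * Afac k' m * (1 + k * k' / ((Ekin k m + m) * (Ekin k' m + m)))

lemma overlap_nonneg (k k' : ℝ) {m : ℝ} (hm : 0 ≤ m) : 0 ≤ overlap k k' m := by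
  have h : |k| ≤ Ekin k m + m := by linarith [abs_le_Ekin k m]
  have h' : |k'| ≤ Ekin k' m + m := by linarith [abs_le_Ekin k' m]
  have hbound : |k * k'| ≤ (Ekin k m + m) * (Ekin k' m + m) := by
    rw [abs_mul]
    exact mul_le_mul h h' (abs_nonneg k') ((abs_nonneg k).trans h)
  have : 0 ≤ 1 + k * k' / ((Ekin k m + m) * (Ekin k' m + m)) := by
    linarith [neg_one_le_div_of_abs_le hbound]
  unfold overlap Afac
  positivity

lemma overlap_sq {k k' : ℝ} (hk : k ≠ 0) (hk' : k' ≠ 0) (m : ℝ) :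
    overlap k k' m ^ 2 = (1 + cosAngle k k' m) / 2 := by
  have := Ekin_pos hk m
  have := Ekin_pos hk' m
  have := Ekin_add_pos hk m
  have := Ekin_add_pos hk' m
  rw [overlap, cosAngle, mul_pow, mul_pow, Afac_sq, Afac_sq]
  field_simp
  -- `((E + m)(E' + m) + kk')² = 2 (E + m)(E' + m)(E E' + m² + kk')`
  linear_combination (m ^ 2 - Ekin k' m ^ 2) * Ekin_sq k m - k ^ 2 * Ekin_sq k' m

/-- For `k k' < 0`, the function
`m ↦ A(k,m)A(k',m)(1 + kk'/((E(k,m)+m)(E(k',m)+m)))` is monotonically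
increasing on `[0,∞)`. -/
theorem stmt0 (k k' : ℝ) (hkk' : k * k' < 0) :
    MonotoneOn
      (fun m : ℝ =>
        Afac k m * Afac k' m *
          (1 + k * k' / ((Ekin k m + m) * (Ekin k' m + m))))
      (Set.Ici (0 : ℝ)) := by
  have hk : k ≠ 0 := left_ne_zero_of_mul hkk'.ne
  have hk' : k' ≠ 0 := right_ne_zero_of_mul hkk'.ne
  intro s (hs : 0 ≤ s) t (ht : 0 ≤ t) hst
  change overlap k k' s ≤ overlap k k' t
  rw [← sq_le_sq₀ (overlap_nonneg k k' hs) (overlap_nonneg k k' ht), overlap_sq hk hk',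
    overlap_sq hk hk']
  linarith [cosAngle_monotoneOn hkk' hs ht hst]
end

section
/- For kk' > 0 with k ≠ k', the function m ↦ f(k,k',m) = A(k)A(k')(1 + kk'/((E(k)+m)(E(k')+m))) satisfies ∂f/∂m = 0 at m = 0, where E(k)=√(k²+m²) and A(k)=√((E(k)+m)/(2E(k))). -/
open Real Set

/-!
At `m = 0` we have `E(k,0) = |k|` and `∂E/∂m = m/E = 0`, so `E + m` has derivative `1`.
Hence `A(k,0) = √2/2` and `A'/A = 1/(2|k|)` there, so the logarithmic derivative of
`A(k)A(k')` at `0` is `(1/|k| + 1/|k'|)/2`. Since `kk' = |k||k'|`, the last factor equals `2`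
at `m = 0` and has logarithmic derivative `-(1/|k| + 1/|k'|)/2`: the two contributions cancel.
-/

lemma Ekin_zero (k : ℝ) : Ekin k 0 = |k| := by
  simp [Ekin, Real.sqrt_sq_eq_abs]

lemma hasDerivAt_Ekin {k m : ℝ} (h : k ^ 2 + m ^ 2 ≠ 0) :
    HasDerivAt (Ekin k) (m / Ekin k m) m := by
  have hE : √(k ^ 2 + m ^ 2) ≠ 0 := Real.sqrt_ne_zero'.mpr (lt_of_le_of_ne (by positivity) h.symm)
  refine (((hasDerivAt_pow 2 m).const_add (k ^ 2)).sqrt h).congr_deriv ?_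
  unfold Ekin
  field_simp
  norm_num

lemma hasDerivAt_Ekin_add_self_zero {k : ℝ} (hk : k ≠ 0) :
    HasDerivAt (fun m => Ekin k m + m) 1 0 :=
  ((hasDerivAt_Ekin (m := 0) (by positivity)).add (hasDerivAt_id' 0)).congr_deriv (by simp)

lemma Afac_zero {k : ℝ} (hk : k ≠ 0) : Afac k 0 = √2 / 2 := by
  rw [Afac, Ekin_zero, add_zero, div_mul_cancel_right₀ (abs_ne_zero.mpr hk), Real.sqrt_inv]
  field_simp
  simp

lemma hasDerivAt_Afac_zero {k : ℝ} (hk : k ≠ 0) :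
    HasDerivAt (Afac k) (√2 / (4 * |k|)) 0 := by
  have hE : Ekin k 0 ≠ 0 := by rw [Ekin_zero]; positivity
  have hratio := (hasDerivAt_Ekin_add_self_zero hk).div
    ((hasDerivAt_Ekin (m := 0) (by positivity)).const_mul 2) (mul_ne_zero two_ne_zero hE)
  refine (hratio.sqrt (by simp [hE])).congr_deriv ?_
  change _ / (2 * Afac k 0) = _
  rw [Afac_zero hk, Ekin_zero]
  field_simp
  rw [Real.sq_sqrt zero_le_two]
  ring

lemma one_add_div_Ekin_zero {k k' : ℝ} (hkk' : 0 < k * k') :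
    1 + k * k' / ((Ekin k 0 + 0) * (Ekin k' 0 + 0)) = 2 := by
  rw [Ekin_zero, Ekin_zero, add_zero, add_zero, ← abs_mul, abs_of_pos hkk', div_self hkk'.ne']
  norm_num

lemma hasDerivAt_one_add_div_Ekin_zero {k k' : ℝ} (hkk' : 0 < k * k') :
    HasDerivAt (fun m => 1 + k * k' / ((Ekin k m + m) * (Ekin k' m + m)))
      (-(|k| + |k'|) / (|k| * |k'|)) 0 := by
  have hk : k ≠ 0 := left_ne_zero_of_mul hkk'.ne'
  have hk' : k' ≠ 0 := right_ne_zero_of_mul hkk'.ne'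
  have hD := (hasDerivAt_Ekin_add_self_zero hk).mul (hasDerivAt_Ekin_add_self_zero hk')
  refine (((hasDerivAt_const (0 : ℝ) (k * k')).div hD
    (by simp [Ekin_zero, hk, hk'])).const_add 1).congr_deriv ?_
  have hab : k * k' = |k| * |k'| := by rw [← abs_mul, abs_of_pos hkk']
  simp only [Pi.mul_apply, Ekin_zero, hab]
  field_simp
  ring

theorem stmt1_general (k k' : ℝ) (hkk' : 0 < k * k') :
    HasDerivAt
      (fun m : ℝ =>
        Afac k m * Afac k' m *
          (1 + k * k' / ((Ekin k m + m) * (Ekin k' m + m))))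
      0 0 := by
  have hk : k ≠ 0 := left_ne_zero_of_mul hkk'.ne'
  have hk' : k' ≠ 0 := right_ne_zero_of_mul hkk'.ne'
  refine (((hasDerivAt_Afac_zero hk).mul (hasDerivAt_Afac_zero hk')).mul
    (hasDerivAt_one_add_div_Ekin_zero hkk')).congr_deriv ?_
  simp only [Pi.mul_apply, Afac_zero hk, Afac_zero hk', one_add_div_Ekin_zero hkk']
  field_simp
  ring

/-- For `kk' > 0`, `k ≠ k'`, the function
`f(m) = A(k,m)A(k',m)(1 + kk'/((E(k,m)+m)(E(k',m)+m)))` is differentiable at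
`m = 0` with derivative `0`. -/
theorem stmt1 (k k' : ℝ) (hkk' : 0 < k * k') (hne : k ≠ k') :
    HasDerivAt
      (fun m : ℝ =>
        Afac k m * Afac k' m *
          (1 + k * k' / ((Ekin k m + m) * (Ekin k' m + m))))
      0 0 :=
  stmt1_general k k' hkk'
end
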